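/- Let V, ω be real with 0 < ω < V, and let u(x) be defined piecewise by u(x) = e^{√(V-ω)x} for x < -L, u(x) = c_e cos(√ω x) + c_o sin(√ω x) for |x| ≤ L, and u(x) = c_r e^{-√(V-ω)x} for x > L. If u and u' are continuous at x = -L and x = L for some constants c_e, c_o, c_r (not all making u identically zero on the middle interval), then √(V-ω)·(1 - 2cos²(√ω L)) = ½·(V/√ω - 2√ω)·sin(2√ω L). -/

import Mathlib

/-!
With `k = √ω`, `κ = √(V - ω)` and `θ = k L`, eliminating the exponential values from the four
matching conditions leaves two linear relations between `c_e` and `c_o`; their sum and difference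
decouple into `c_o (k cos θ + κ sin θ) = 0` and `c_e (k sin θ - κ cos θ) = 0`. Since `c_e, c_o` do
not both vanish, one of the odd (`k cos θ = -κ sin θ`) or even (`k sin θ = κ cos θ`) quantization
conditions holds, and the product of the two, expanded with `V = κ² + k²` and the double angle
formula, is the claimed identity.
-/

open Real

theorem even_mul_odd_eq_zero_of_matching {κ k s c a b c_e c_o : ℝ}
    (hleft : a = c_e * c - c_o * s) (hleft' : κ * a = k * (c_e * s + c_o * c))
    (hright : c_e * c + c_o * s = b) (hright' : k * (c_o * c - c_e * s) = -κ * b)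
    (hne : ¬(c_e = 0 ∧ c_o = 0)) :
    (k * s - κ * c) * (k * c + κ * s) = 0 := by
  have hodd : c_o * (k * c + κ * s) = 0 := by
    linear_combination (1 / 2) * κ * hleft - (1 / 2) * hleft' + (1 / 2) * κ * hright
      + (1 / 2) * hright'
  have heven : c_e * (k * s - κ * c) = 0 := by
    linear_combination (1 / 2) * κ * hleft - (1 / 2) * hleft' - (1 / 2) * κ * hright
      - (1 / 2) * hright'
  rcases mul_eq_zero.mp hodd with hco | hodd
  · rcases mul_eq_zero.mp heven with hce | heven
    · exact absurd ⟨hce, hco⟩ hne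
    · rw [heven, zero_mul]
  · rw [hodd, mul_zero]

theorem transcendental_of_even_mul_odd_eq_zero {κ k θ : ℝ} (hk : k ≠ 0)
    (h : (k * sin θ - κ * cos θ) * (k * cos θ + κ * sin θ) = 0) :
    κ * (1 - 2 * cos θ ^ 2) = (1 / 2) * ((κ ^ 2 + k ^ 2) / k - 2 * k) * sin (2 * θ) := by
  rw [sin_two_mul]
  field_simp
  linear_combination h - k * κ * sin_sq_add_cos_sq θ

theorem linear_limit_transcendental_general
    (V ω L : ℝ) (hω : 0 < ω) (hV : ω < V)
    (c_e c_o c_r : ℝ)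
    -- continuity of u at x = -L and x = L
    (hc1 : Real.exp (Real.sqrt (V - ω) * (-L)) =
      c_e * Real.cos (Real.sqrt ω * (-L)) + c_o * Real.sin (Real.sqrt ω * (-L)))
    (hc2 : c_e * Real.cos (Real.sqrt ω * L) + c_o * Real.sin (Real.sqrt ω * L) =
      c_r * Real.exp (-(Real.sqrt (V - ω)) * L))
    -- continuity of u' at x = -L and x = L
    (hd1 : Real.sqrt (V - ω) * Real.exp (Real.sqrt (V - ω) * (-L)) =
      -c_e * Real.sqrt ω * Real.sin (Real.sqrt ω * (-L)) +
        c_o * Real.sqrt ω * Real.cos (Real.sqrt ω * (-L)))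
    (hd2 : -c_e * Real.sqrt ω * Real.sin (Real.sqrt ω * L) +
        c_o * Real.sqrt ω * Real.cos (Real.sqrt ω * L) =
      -(Real.sqrt (V - ω)) * c_r * Real.exp (-(Real.sqrt (V - ω)) * L))
    -- nontriviality on the middle interval
    (hnontriv : ¬ (c_e = 0 ∧ c_o = 0)) :
    Real.sqrt (V - ω) * (1 - 2 * Real.cos (Real.sqrt ω * L) ^ 2) =
      (1 / 2) * (V / Real.sqrt ω - 2 * Real.sqrt ω) * Real.sin (2 * Real.sqrt ω * L) := by
  simp only [mul_neg, cos_neg, sin_neg] at hc1 hd1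
  have hquant := even_mul_odd_eq_zero_of_matching (κ := √(V - ω)) (k := √ω)
    (s := sin (√ω * L)) (c := cos (√ω * L)) (a := exp (-(√(V - ω) * L)))
    (by linear_combination hc1)
    (by linear_combination hd1) hc2 (by linear_combination hd2) hnontriv
  have hV_eq : √(V - ω) ^ 2 + √ω ^ 2 = V := by
    rw [sq_sqrt (by linarith), sq_sqrt hω.le]
    ring
  have := transcendental_of_even_mul_odd_eq_zero (sqrt_pos.mpr hω).ne' hquant
  rwa [hV_eq, ← mul_assoc] at this

/-- matching of the piecewise linear-limit solution at `x = ±L`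
forces the transcendental equation. -/
theorem linear_limit_transcendental
    (V ω L : ℝ) (hω : 0 < ω) (hV : ω < V) (hL : 0 < L)
    (c_e c_o c_r : ℝ)
    (u : ℝ → ℝ)
    (hleft : ∀ x < -L, u x = Real.exp (Real.sqrt (V - ω) * x))
    (hmid : ∀ x, -L ≤ x → x ≤ L →
      u x = c_e * Real.cos (Real.sqrt ω * x) + c_o * Real.sin (Real.sqrt ω * x))
    (hright : ∀ x > L, u x = c_r * Real.exp (-(Real.sqrt (V - ω)) * x))
    -- continuity of u at x = -L and x = L
    (hc1 : Real.exp (Real.sqrt (V - ω) * (-L)) =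
      c_e * Real.cos (Real.sqrt ω * (-L)) + c_o * Real.sin (Real.sqrt ω * (-L)))
    (hc2 : c_e * Real.cos (Real.sqrt ω * L) + c_o * Real.sin (Real.sqrt ω * L) =
      c_r * Real.exp (-(Real.sqrt (V - ω)) * L))
    -- continuity of u' at x = -L and x = L
    (hd1 : Real.sqrt (V - ω) * Real.exp (Real.sqrt (V - ω) * (-L)) =
      -c_e * Real.sqrt ω * Real.sin (Real.sqrt ω * (-L)) +
        c_o * Real.sqrt ω * Real.cos (Real.sqrt ω * (-L)))
    (hd2 : -c_e * Real.sqrt ω * Real.sin (Real.sqrt ω * L) +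
        c_o * Real.sqrt ω * Real.cos (Real.sqrt ω * L) =
      -(Real.sqrt (V - ω)) * c_r * Real.exp (-(Real.sqrt (V - ω)) * L))
    -- nontriviality on the middle interval
    (hnontriv : ¬ (c_e = 0 ∧ c_o = 0)) :
    Real.sqrt (V - ω) * (1 - 2 * Real.cos (Real.sqrt ω * L) ^ 2) =
      (1 / 2) * (V / Real.sqrt ω - 2 * Real.sqrt ω) * Real.sin (2 * Real.sqrt ω * L) :=
  linear_limit_transcendental_general V ω L hω hV c_e c_o c_r hc1 hc2 hd1 hd2 hnontriv
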